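/- arXiv:2305.06736 — 2 statements merged into one kernel-verified Lean document; each statement's English description precedes it below -/
import Mathlib

section
/- Let E be a Hausdorff locally convex topological vector space and F = [C]^× a nonempty subset of E, weak-admissible at x̂ ∈ F \ int(F) and determined by C. If the set S := { φ ∈ C : φ(x̂) ≠ 0 } is finite, then T_C(x̂) equals the weak-star closed convex hull of { d_Gφ(x̂) : φ ∈ C, φ(x̂) = 0 }. If moreover C itself is finite, then T_C(x̂) = conv{ d_Gφ(x̂) : φ ∈ C, φ(x̂) = 0 } (the convex hull, no closure needed). -/
open Topology Filter Set

noncomputable section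

section Defs

variable {E : Type*} [AddCommGroup E] [Module ℝ E] [TopologicalSpace E]

/-- The canonical map from the topological dual of `E` to the weak-star dual. -/
def toWD (φ : E →L[ℝ] ℝ) : WeakDual ℝ E := φ

/-- The weak-star closed convex hull of a set of continuous linear functionals. -/
def wcch (B : Set (E →L[ℝ] ℝ)) : Set (WeakDual ℝ E) :=
  closure (convexHull ℝ (toWD '' B))

/-- `f` is Gateaux differentiable at `x` with Gateaux-differential `f'`. -/
def HasGateauxAt (f : E → ℝ) (f' : E →L[ℝ] ℝ) (x : E) : Prop :=
  ∀ v : E, Tendsto (fun t : ℝ => (f (x + t • v) - f x - t * f' v) / t) (𝓝[>] 0) (𝓝 0)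

/-- The family `C` is equi-Gateaux differentiable at `x`, with differentials given by `D`. -/
def EquiGateauxAt (C : Set (E → ℝ)) (D : (E → ℝ) → E →L[ℝ] ℝ) (x : E) : Prop :=
  (∀ φ ∈ C, HasGateauxAt φ (D φ) x) ∧
  ∀ v : E, ∀ ε : ℝ, 0 < ε → ∃ δ : ℝ, 0 < δ ∧ ∀ t : ℝ, 0 < t → t < δ →
    ∀ φ ∈ C, |(φ (x + t • v) - φ x - t * (D φ) v) / t| ≤ ε

/-- The family `C` is equi-lower semicontinuous at `x`. -/
def EquiLscAt (C : Set (E → ℝ)) (x : E) : Prop :=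
  ∀ ε : ℝ, 0 < ε → ∃ O ∈ 𝓝 x, ∀ y ∈ O, ∀ φ ∈ C, φ y - φ x > -ε

/-- `[C]^× = {x ∈ E : φ(x) ≥ 0 for all φ ∈ C}`. -/
def polarSet (C : Set (E → ℝ)) : Set E := {x | ∀ φ ∈ C, 0 ≤ φ x}

/-- The multiplier set `T_C(x̂)`. -/
def multSet (C : Set (E → ℝ)) (D : (E → ℝ) → E →L[ℝ] ℝ) (x : E) : Set (WeakDual ℝ E) :=
  ⋂ n ∈ {n : ℕ | 1 ≤ n}, wcch (D '' {φ | φ ∈ C ∧ φ x ∈ Icc (0:ℝ) (1/(n:ℝ))})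

/-- `F` is weak-admissible at `x ∈ F`, determined by `C` (with differentials `D`). -/
def WeakAdmissibleAt (F : Set E) (C : Set (E → ℝ)) (D : (E → ℝ) → E →L[ℝ] ℝ) (x : E) : Prop :=
  x ∈ F ∧ C.Nonempty ∧ F = polarSet C ∧ EquiGateauxAt C D x ∧
    ({φ | φ ∈ C ∧ φ x ≠ 0} = ∅ ∨ EquiLscAt {φ | φ ∈ C ∧ φ x ≠ 0} x) ∧
    IsCompact (wcch (D '' C))

end Defs

section NormedDefs

variable {Y : Type*} [NormedAddCommGroup Y] [NormedSpace ℝ Y]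

/-- `A` is admissible at `x ∈ A`, determined by `C` (with differentials `D`). -/
def AdmissibleAt (A : Set Y) (C : Set (Y → ℝ)) (D : (Y → ℝ) → Y →L[ℝ] ℝ) (x : Y) : Prop :=
  x ∈ A ∧ C.Nonempty ∧ A = polarSet C ∧ EquiGateauxAt C D x ∧
    (∃ r : NNReal, ∃ ε : ℝ, 0 < ε ∧ ∀ φ ∈ C, LipschitzOnWith r φ (Metric.ball x ε)) ∧
    toWD (0 : Y →L[ℝ] ℝ) ∉ wcch (D '' C)

/-- The recession cone of a set. -/
def recCone (K : Set Y) : Set Y := {v | ∀ l : ℝ, 0 < l → ∀ x ∈ K, x + l • v ∈ K}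

/-- The barrier cone of `K`: functionals bounded above on `K`. -/
def barCone (K : Set Y) : Set (Y →L[ℝ] ℝ) := {φ | BddAbove (φ '' K)}

/-- The dual positive cone `A*`. -/
def posDualCone (A : Set Y) : Set (Y →L[ℝ] ℝ) := {φ | ∀ y ∈ A, 0 ≤ φ y}

end NormedDefs

/-
If only finitely many `φ ∈ C` are inactive at `x̂`, their values there have a positive minimum
`ε`; once `1/n < ε`, the constraints with `0 ≤ φ(x̂) ≤ 1/n` are exactly the active ones, so the
decreasing intersection defining `T_C(x̂)` stabilises at the weak-star closed convex hull of
the active differentials. When `C` is finite that hull is the convex hull of finitely many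
points, which is already compact, hence closed.
-/

theorem exists_pos_forall_lt_imp_eq_zero {α : Type*} {s : Set α} {f : α → ℝ}
    (hf : ∀ a ∈ s, 0 ≤ f a) (hfin : {a | a ∈ s ∧ f a ≠ 0}.Finite) :
    ∃ ε > 0, ∀ a ∈ s, f a < ε → f a = 0 := by
  rcases {a | a ∈ s ∧ f a ≠ 0}.eq_empty_or_nonempty with hempty | hne
  · refine ⟨1, one_pos, fun a ha _ => ?_⟩
    by_contra h
    exact hempty.subset ⟨ha, h⟩
  · obtain ⟨a₀, ⟨ha₀, hfa₀⟩, hmin⟩ := hfin.exists_minimalFor f _ hne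
    refine ⟨f a₀, (hf a₀ ha₀).lt_of_ne' hfa₀, fun a ha hlt => ?_⟩
    by_contra h
    exact hlt.not_ge (hmin ⟨ha, h⟩ hlt.le)

section MultSet

variable {E : Type*} [AddCommGroup E] [Module ℝ E] [TopologicalSpace E]

theorem WeakAdmissibleAt.nonneg {F : Set E} {C : Set (E → ℝ)} {D : (E → ℝ) → E →L[ℝ] ℝ}
    {x : E} (h : WeakAdmissibleAt F C D x) : ∀ φ ∈ C, 0 ≤ φ x := by
  obtain ⟨hxF, -, hFC, -⟩ := h
  rw [hFC] at hxF
  exact hxF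

theorem wcch_mono {A B : Set (E →L[ℝ] ℝ)} (hAB : A ⊆ B) : wcch A ⊆ wcch B :=
  closure_mono (convexHull_mono (image_mono hAB))

theorem wcch_eq_convexHull_of_finite {B : Set (E →L[ℝ] ℝ)} (hB : B.Finite) :
    wcch B = convexHull ℝ (toWD '' B) :=
  ((hB.image toWD).isCompact_convexHull (𝕜 := ℝ)).isClosed.closure_eq

theorem wcch_subset_multSet (C : Set (E → ℝ)) (D : (E → ℝ) → E →L[ℝ] ℝ) (x : E) :
    wcch (D '' {φ | φ ∈ C ∧ φ x = 0}) ⊆ multSet C D x := by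
  refine subset_iInter₂ fun n _ => wcch_mono (image_mono ?_)
  rintro φ ⟨hφ, h0⟩
  exact ⟨hφ, by rw [h0]; exact left_mem_Icc.mpr (by positivity)⟩

theorem multSet_eq_wcch_of_finite {C : Set (E → ℝ)} (D : (E → ℝ) → E →L[ℝ] ℝ) {x : E}
    (hC : ∀ φ ∈ C, 0 ≤ φ x) (hS : {φ | φ ∈ C ∧ φ x ≠ 0}.Finite) :
    multSet C D x = wcch (D '' {φ | φ ∈ C ∧ φ x = 0}) := by
  obtain ⟨ε, hε, hgap⟩ := exists_pos_forall_lt_imp_eq_zero hC hS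
  obtain ⟨n, hn⟩ := exists_nat_one_div_lt hε
  have hlevel : {φ | φ ∈ C ∧ φ x ∈ Icc (0:ℝ) (1 / ((n + 1 : ℕ) : ℝ))} ⊆
      {φ | φ ∈ C ∧ φ x = 0} := fun φ ⟨hφ, _, hle⟩ =>
    ⟨hφ, hgap φ hφ (hle.trans_lt (by exact_mod_cast hn))⟩
  refine (wcch_subset_multSet C D x).antisymm' ?_
  exact (biInter_subset_of_mem (Nat.le_add_left 1 n)).trans (wcch_mono (image_mono hlevel))

end MultSet

theorem multSet_of_finite_active_general
    {E : Type*} [AddCommGroup E] [Module ℝ E] [TopologicalSpace E]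
    (F : Set E) (C : Set (E → ℝ)) (D : (E → ℝ) → E →L[ℝ] ℝ) (xh : E)
    (hadm : WeakAdmissibleAt F C D xh) :
    ({φ | φ ∈ C ∧ φ xh ≠ 0}.Finite →
      multSet C D xh = wcch (D '' {φ | φ ∈ C ∧ φ xh = 0})) ∧
    (C.Finite →
      multSet C D xh = convexHull ℝ (toWD '' (D '' {φ | φ ∈ C ∧ φ xh = 0}))) := by
  have hfinite_inactive (hS : {φ | φ ∈ C ∧ φ xh ≠ 0}.Finite) :=
    multSet_eq_wcch_of_finite D hadm.nonneg hS
  refine ⟨hfinite_inactive, fun hC => ?_⟩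
  rw [hfinite_inactive (hC.subset (sep_subset C _)),
    wcch_eq_convexHull_of_finite ((hC.subset (sep_subset C _)).image D)]

/-- If `F = [C]^×` is weak-admissible at `xh ∈ F \ int(F)` determined by `C`
and `S = {φ ∈ C : φ(xh) ≠ 0}` is finite, then `T_C(xh)` is the weak-star closed convex hull
of `{d_Gφ(xh) : φ ∈ C, φ(xh) = 0}`; if moreover `C` is finite, then `T_C(xh)` is the plain
convex hull of that set. -/
theorem multSet_of_finite_active
    {E : Type*} [AddCommGroup E] [Module ℝ E] [TopologicalSpace E]
    [IsTopologicalAddGroup E] [ContinuousSMul ℝ E] [LocallyConvexSpace ℝ E] [T2Space E]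
    (F : Set E) (hF : F.Nonempty) (C : Set (E → ℝ)) (D : (E → ℝ) → E →L[ℝ] ℝ) (xh : E)
    (hadm : WeakAdmissibleAt F C D xh)
    (hx : xh ∈ F \ interior F) :
    ({φ | φ ∈ C ∧ φ xh ≠ 0}.Finite →
      multSet C D xh = wcch (D '' {φ | φ ∈ C ∧ φ xh = 0})) ∧
    (C.Finite →
      multSet C D xh = convexHull ℝ (toWD '' (D '' {φ | φ ∈ C ∧ φ xh = 0}))) :=
  multSet_of_finite_active_general F C D xh hadm
end
end

section
/- Let Y be a normed vector space, F ≠ Y a nonempty closed convex subset, and C := { y* − inf_{x∈F} y*(x) : y* ∈ S_{Y*} ∩ (−bar(F)) }, so that F = [C]^×. Then for every x̂ ∈ F, T_C(x̂) ⊂ { y* ∈ weak-star closed convex hull of S_{Y*} ∩ (−bar(F)) : y*(x̂) = inf_{x∈F} y*(x) } ⊂ { y* ∈ (R_F)* : y*(x̂) = inf_{x∈F} y*(x) }. If F ≠ Y is a closed convex cone, then F = [C]^× with C = S_{Y*} ∩ F* and T_C(x̂) ⊂ { y* ∈ weak-star closed convex hull of S_{Y*} ∩ F* : y*(x̂) =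 0 } ⊂ { y* ∈ F* : y*(x̂) = 0 }. -/
open Topology Filter Set

noncomputable section

/-!
A point outside the closed convex set `F` is strictly separated from `F` by a unit functional
(Hahn–Banach), which is bounded below on `F`, and even nonnegative on `F` when `F` is a cone; this
gives both representations `F = [C]^×`. Every condition `c ≤ q v` is a weak-star closed half-space,
so it passes from the generators to their weak-star closed convex hull. Hence an element `q` of
`T_C(x̂)` satisfies `q (x - x̂) ≥ -1/n` for all `x ∈ F` and all `n`, i.e. `x̂` minimises `q` on `F`;
and every element of the hull is nonnegative on `R_F`, because a functional bounded below on `F`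
cannot decrease along a ray contained in `F`.
-/

section WeakStarHull

variable {E : Type*} [AddCommGroup E] [Module ℝ E] [TopologicalSpace E]

lemma wcch_mono_s9 {S T : Set (E →L[ℝ] ℝ)} (h : S ⊆ T) : wcch S ⊆ wcch T :=
  closure_mono (convexHull_mono (image_mono h))

lemma le_apply_of_mem_wcch {S : Set (E →L[ℝ] ℝ)} {v : E} {c : ℝ} (h : ∀ φ ∈ S, c ≤ φ v)
    {q : WeakDual ℝ E} (hq : q ∈ wcch S) : c ≤ q v := by
  have hclosed : IsClosed {q : WeakDual ℝ E | c ≤ q v} :=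
    isClosed_le continuous_const (WeakDual.eval_continuous v)
  have hconvex : Convex ℝ {q : WeakDual ℝ E | c ≤ q v} :=
    convex_halfSpace_ge ⟨fun _ _ => rfl, fun _ _ => rfl⟩ c
  have hsub : toWD '' S ⊆ {q : WeakDual ℝ E | c ≤ q v} := by
    rintro _ ⟨φ, hφ, rfl⟩
    exact h φ hφ
  exact closure_minimal (convexHull_min hsub hconvex) hclosed hq

lemma apply_nonneg_of_mem_iInter_wcch {S : ℕ → Set (E →L[ℝ] ℝ)} {v : E}
    (h : ∀ n, 1 ≤ n → ∀ φ ∈ S n, -(1 / (n : ℝ)) ≤ φ v) {q : WeakDual ℝ E}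
    (hq : q ∈ ⋂ n ∈ {n : ℕ | 1 ≤ n}, wcch (S n)) : 0 ≤ q v := by
  rw [mem_iInter₂] at hq
  refine le_of_forall_pos_lt_add fun ε hε => ?_
  obtain ⟨n, hn⟩ := exists_nat_one_div_lt hε
  have := le_apply_of_mem_wcch (h (n + 1) n.succ_pos) (hq (n + 1) n.succ_pos)
  push_cast at this
  linarith

lemma apply_eq_zero_of_mem_iInter_wcch {S : ℕ → Set (E →L[ℝ] ℝ)} {v : E}
    (h : ∀ n, 1 ≤ n → ∀ φ ∈ S n, φ v ∈ Icc (0:ℝ) (1/(n:ℝ))) {q : WeakDual ℝ E}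
    (hq : q ∈ ⋂ n ∈ {n : ℕ | 1 ≤ n}, wcch (S n)) : q v = 0 := by
  have hle := apply_nonneg_of_mem_iInter_wcch (v := -v)
    (fun n hn φ hφ => by rw [map_neg]; exact neg_le_neg (h n hn φ hφ).2) hq
  have hge := apply_nonneg_of_mem_iInter_wcch (v := v)
    (fun n hn φ hφ => (neg_nonpos.2 (by positivity)).trans (h n hn φ hφ).1) hq
  rw [map_neg] at hle
  linarith

end WeakStarHull

lemma nonneg_of_forall_pos_le_add_mul {a b d : ℝ} (h : ∀ l : ℝ, 0 < l → b ≤ a + l * d) :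
    0 ≤ d := by
  by_contra! hd
  have hl : 0 < (|a - b| + 1) / -d := div_pos (by positivity) (neg_pos.mpr hd)
  have := h _ hl
  rw [div_mul_eq_mul_div, div_neg, mul_div_cancel_right₀ _ hd.ne] at this
  linarith [le_abs_self (a - b)]

section Cones

variable {E : Type*} [AddCommGroup E] [Module ℝ E]

lemma apply_nonneg_of_bddBelow_of_smul_mem {F : Set E}
    (hcone : ∀ c : ℝ, 0 < c → ∀ x ∈ F, c • x ∈ F) {φ : E →ₗ[ℝ] ℝ} (hφ : BddBelow (φ '' F))
    {y : E} (hy : y ∈ F) : 0 ≤ φ y := by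
  obtain ⟨b, hb⟩ := hφ
  refine nonneg_of_forall_pos_le_add_mul (a := 0) (b := b) fun l hl => ?_
  simpa using hb (mem_image_of_mem φ (hcone l hl y hy))

lemma zero_mem_of_isClosed_of_smul_mem [TopologicalSpace E] [ContinuousSMul ℝ E] {F : Set E}
    (hne : F.Nonempty) (hcl : IsClosed F) (hcone : ∀ c : ℝ, 0 < c → ∀ x ∈ F, c • x ∈ F) :
    (0 : E) ∈ F := by
  obtain ⟨y, hy⟩ := hne
  have hlim : Tendsto (fun c : ℝ => c • y) (𝓝[>] 0) (𝓝 0) :=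
    ((continuous_id.smul continuous_const).tendsto' (0 : ℝ) 0 (zero_smul ℝ y)).mono_left
      nhdsWithin_le_nhds
  exact hcl.mem_of_tendsto hlim (eventually_nhdsWithin_of_forall fun c hc => hcone c hc y hy)

end Cones

section Normed

variable {Y : Type*} [NormedAddCommGroup Y] [NormedSpace ℝ Y]

lemma bddBelow_image_of_neg_mem_barCone {F : Set Y} {φ : Y →L[ℝ] ℝ} (h : -φ ∈ barCone F) :
    BddBelow (φ '' F) := by
  obtain ⟨M, hM⟩ := h
  refine ⟨-M, forall_mem_image.2 fun y hy => ?_⟩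
  simpa using neg_le_neg (hM (mem_image_of_mem _ hy))

lemma apply_nonneg_of_mem_recCone {F : Set Y} (hne : F.Nonempty) {φ : Y →L[ℝ] ℝ}
    (hφ : -φ ∈ barCone F) {v : Y} (hv : v ∈ recCone F) : 0 ≤ φ v := by
  obtain ⟨b, hb⟩ := bddBelow_image_of_neg_mem_barCone hφ
  obtain ⟨x, hx⟩ := hne
  refine nonneg_of_forall_pos_le_add_mul (a := φ x) (b := b) fun l hl => ?_
  simpa using hb (mem_image_of_mem φ (hv l hl x hx))

lemma exists_norm_eq_one_separating {F : Set Y} (hne : F.Nonempty) (hcl : IsClosed F)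
    (hconv : Convex ℝ F) {x : Y} (hx : x ∉ F) :
    ∃ (g : Y →L[ℝ] ℝ) (u : ℝ), ‖g‖ = 1 ∧ g x < u ∧ ∀ y ∈ F, u < g y := by
  obtain ⟨f, u, hfx, hfF⟩ := geometric_hahn_banach_point_closed hconv hcl hx
  have hf : f ≠ 0 := by
    rintro rfl
    obtain ⟨y, hy⟩ := hne
    simpa using hfx.trans (hfF y hy)
  have hpos : 0 < ‖f‖⁻¹ := inv_pos.mpr (norm_pos_iff.mpr hf)
  refine ⟨‖f‖⁻¹ • f, ‖f‖⁻¹ * u, norm_smul_inv_norm hf, ?_, fun y hy => ?_⟩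
  · exact mul_lt_mul_of_pos_left hfx hpos
  · exact mul_lt_mul_of_pos_left (hfF y hy) hpos

lemma apply_eq_sInf_of_mem_iInter_wcch {F : Set Y} {xh : Y} (hx : xh ∈ F) {q : WeakDual ℝ Y}
    (hq : q ∈ ⋂ n ∈ {n : ℕ | 1 ≤ n}, wcch {φ : Y →L[ℝ] ℝ | ‖φ‖ = 1 ∧ -φ ∈ barCone F ∧
      φ xh - sInf (φ '' F) ∈ Icc (0:ℝ) (1/(n:ℝ))}) :
    q xh = sInf (⇑q '' F) := by
  refine (IsLeast.csInf_eq ⟨mem_image_of_mem _ hx, forall_mem_image.2 fun x hxF => ?_⟩).symm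
  have key : 0 ≤ q (x - xh) := by
    refine apply_nonneg_of_mem_iInter_wcch (fun n _ φ hφ => ?_) hq
    obtain ⟨-, hbar, -, hn⟩ := hφ
    rw [map_sub]
    linarith [csInf_le (bddBelow_image_of_neg_mem_barCone hbar) (mem_image_of_mem φ hxF)]
  rw [map_sub] at key
  linarith

lemma eq_polarSet_sub_sInf {F : Set Y} (hne : F.Nonempty) (hcl : IsClosed F)
    (hconv : Convex ℝ F) :
    F = polarSet ((fun φ : Y →L[ℝ] ℝ => fun y => φ y - sInf (φ '' F)) ''
        {φ : Y →L[ℝ] ℝ | ‖φ‖ = 1 ∧ -φ ∈ barCone F}) := by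
  ext x
  refine ⟨?_, fun hx => by_contra fun hxF => ?_⟩
  · rintro hx _ ⟨φ, ⟨-, hφ⟩, rfl⟩
    exact sub_nonneg.2 (csInf_le (bddBelow_image_of_neg_mem_barCone hφ) (mem_image_of_mem φ hx))
  obtain ⟨g, u, hg, hgx, hgF⟩ := exists_norm_eq_one_separating hne hcl hconv hxF
  have hbar : -g ∈ barCone F := ⟨-u, forall_mem_image.2 fun y hy => by simpa using (hgF y hy).le⟩
  have hu : u ≤ sInf (g '' F) :=
    le_csInf (hne.image g) (forall_mem_image.2 fun y hy => (hgF y hy).le)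
  linarith [sub_nonneg.1 (hx _ ⟨g, ⟨hg, hbar⟩, rfl⟩)]

lemma eq_polarSet_posDualCone {F : Set Y} (hne : F.Nonempty) (hcl : IsClosed F)
    (hconv : Convex ℝ F) (hcone : ∀ c : ℝ, 0 < c → ∀ x ∈ F, c • x ∈ F) :
    F = polarSet ((fun φ : Y →L[ℝ] ℝ => (φ : Y → ℝ)) ''
        {φ : Y →L[ℝ] ℝ | ‖φ‖ = 1 ∧ φ ∈ posDualCone F}) := by
  ext x
  refine ⟨?_, fun hx => by_contra fun hxF => ?_⟩
  · rintro hx _ ⟨φ, ⟨-, hφ⟩, rfl⟩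
    exact hφ x hx
  obtain ⟨g, u, hg, hgx, hgF⟩ := exists_norm_eq_one_separating hne hcl hconv hxF
  have hgpos : g ∈ posDualCone F := fun y hy =>
    apply_nonneg_of_bddBelow_of_smul_mem hcone (φ := (g : Y →ₗ[ℝ] ℝ))
      ⟨u, forall_mem_image.2 fun z hz => (hgF z hz).le⟩ hy
  have hu : u < 0 := by simpa using hgF 0 (zero_mem_of_isClosed_of_smul_mem hne hcl hcone)
  linarith [hx _ ⟨g, ⟨hg, hgpos⟩, rfl⟩]

end Normed

theorem multSet_closed_convex_subset_general
    {Y : Type*} [NormedAddCommGroup Y] [NormedSpace ℝ Y]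
    (F : Set Y) (hne : F.Nonempty) (hcl : IsClosed F) (hconv : Convex ℝ F)
    (xh : Y) (hx : xh ∈ F) :
    (F = polarSet ((fun φ : Y →L[ℝ] ℝ => fun y => φ y - sInf (φ '' F)) ''
        {φ : Y →L[ℝ] ℝ | ‖φ‖ = 1 ∧ -φ ∈ barCone F})) ∧
    ((⋂ n ∈ {n : ℕ | 1 ≤ n}, wcch {φ : Y →L[ℝ] ℝ | ‖φ‖ = 1 ∧ -φ ∈ barCone F ∧
          φ xh - sInf (φ '' F) ∈ Icc (0:ℝ) (1/(n:ℝ))})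
      ⊆ {q : WeakDual ℝ Y | q ∈ wcch {φ : Y →L[ℝ] ℝ | ‖φ‖ = 1 ∧ -φ ∈ barCone F} ∧
          q xh = sInf (⇑q '' F)}) ∧
    ({q : WeakDual ℝ Y | q ∈ wcch {φ : Y →L[ℝ] ℝ | ‖φ‖ = 1 ∧ -φ ∈ barCone F} ∧
          q xh = sInf (⇑q '' F)}
      ⊆ {q : WeakDual ℝ Y | (∀ v ∈ recCone F, 0 ≤ q v) ∧ q xh = sInf (⇑q '' F)}) ∧
    ((∀ c : ℝ, 0 < c → ∀ x ∈ F, c • x ∈ F) →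
      (F = polarSet ((fun φ : Y →L[ℝ] ℝ => (φ : Y → ℝ)) ''
          {φ : Y →L[ℝ] ℝ | ‖φ‖ = 1 ∧ φ ∈ posDualCone F})) ∧
      ((⋂ n ∈ {n : ℕ | 1 ≤ n}, wcch {φ : Y →L[ℝ] ℝ | ‖φ‖ = 1 ∧ φ ∈ posDualCone F ∧
            φ xh ∈ Icc (0:ℝ) (1/(n:ℝ))})
        ⊆ {q : WeakDual ℝ Y | q ∈ wcch {φ : Y →L[ℝ] ℝ | ‖φ‖ = 1 ∧ φ ∈ posDualCone F} ∧
            q xh = 0}) ∧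
      ({q : WeakDual ℝ Y | q ∈ wcch {φ : Y →L[ℝ] ℝ | ‖φ‖ = 1 ∧ φ ∈ posDualCone F} ∧
            q xh = 0}
        ⊆ {q : WeakDual ℝ Y | (∀ y ∈ F, 0 ≤ q y) ∧ q xh = 0})) := by
  refine ⟨eq_polarSet_sub_sInf hne hcl hconv, fun q hq => ⟨?_, ?_⟩, ?_, fun hcone => ⟨?_, ?_, ?_⟩⟩
  · exact wcch_mono_s9 (fun _ => And.imp_right And.left) (mem_iInter₂.1 hq 1 (by norm_num))
  · exact apply_eq_sInf_of_mem_iInter_wcch hx hq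
  · rintro q ⟨hq, hqx⟩
    exact ⟨fun v hv => le_apply_of_mem_wcch (fun _ hφ => apply_nonneg_of_mem_recCone hne hφ.2 hv) hq,
      hqx⟩
  · exact eq_polarSet_posDualCone hne hcl hconv hcone
  · intro q hq
    exact ⟨wcch_mono_s9 (fun _ => And.imp_right And.left) (mem_iInter₂.1 hq 1 (by norm_num)),
      apply_eq_zero_of_mem_iInter_wcch (fun _ _ _ hφ => hφ.2.2) hq⟩
  · rintro q ⟨hq, hqx⟩
    exact ⟨fun y hy => le_apply_of_mem_wcch (fun φ hφ => hφ.2 y hy) hq, hqx⟩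

/-- For a nonempty closed convex `F ≠ Y` determined by
`C = {y* − inf_F y* : y* ∈ S_{Y*} ∩ (−bar(F))}` one has `F = [C]^×` and, for every `xh ∈ F`,
`T_C(xh) ⊆ {y* ∈ w*cch(S_{Y*} ∩ (−bar F)) : y*(xh) = inf_F y*} ⊆
{y* ∈ (R_F)* : y*(xh) = inf_F y*}`; and for a closed convex cone `F ≠ Y`, `F = [S_{Y*} ∩ F*]^×`
with `T_C(xh) ⊆ {y* ∈ w*cch(S_{Y*} ∩ F*) : y*(xh) = 0} ⊆ {y* ∈ F* : y*(xh) = 0}`. -/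
theorem multSet_closed_convex_subset
    {Y : Type*} [NormedAddCommGroup Y] [NormedSpace ℝ Y]
    (F : Set Y) (hne : F.Nonempty) (hcl : IsClosed F) (hconv : Convex ℝ F)
    (hF : F ≠ Set.univ) (xh : Y) (hx : xh ∈ F) :
    (F = polarSet ((fun φ : Y →L[ℝ] ℝ => fun y => φ y - sInf (φ '' F)) ''
        {φ : Y →L[ℝ] ℝ | ‖φ‖ = 1 ∧ -φ ∈ barCone F})) ∧
    ((⋂ n ∈ {n : ℕ | 1 ≤ n}, wcch {φ : Y →L[ℝ] ℝ | ‖φ‖ = 1 ∧ -φ ∈ barCone F ∧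
          φ xh - sInf (φ '' F) ∈ Icc (0:ℝ) (1/(n:ℝ))})
      ⊆ {q : WeakDual ℝ Y | q ∈ wcch {φ : Y →L[ℝ] ℝ | ‖φ‖ = 1 ∧ -φ ∈ barCone F} ∧
          q xh = sInf (⇑q '' F)}) ∧
    ({q : WeakDual ℝ Y | q ∈ wcch {φ : Y →L[ℝ] ℝ | ‖φ‖ = 1 ∧ -φ ∈ barCone F} ∧
          q xh = sInf (⇑q '' F)}
      ⊆ {q : WeakDual ℝ Y | (∀ v ∈ recCone F, 0 ≤ q v) ∧ q xh = sInf (⇑q '' F)}) ∧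
    ((∀ c : ℝ, 0 < c → ∀ x ∈ F, c • x ∈ F) →
      (F = polarSet ((fun φ : Y →L[ℝ] ℝ => (φ : Y → ℝ)) ''
          {φ : Y →L[ℝ] ℝ | ‖φ‖ = 1 ∧ φ ∈ posDualCone F})) ∧
      ((⋂ n ∈ {n : ℕ | 1 ≤ n}, wcch {φ : Y →L[ℝ] ℝ | ‖φ‖ = 1 ∧ φ ∈ posDualCone F ∧
            φ xh ∈ Icc (0:ℝ) (1/(n:ℝ))})
        ⊆ {q : WeakDual ℝ Y | q ∈ wcch {φ : Y →L[ℝ] ℝ | ‖φ‖ = 1 ∧ φ ∈ posDualCone F} ∧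
            q xh = 0}) ∧
      ({q : WeakDual ℝ Y | q ∈ wcch {φ : Y →L[ℝ] ℝ | ‖φ‖ = 1 ∧ φ ∈ posDualCone F} ∧
            q xh = 0}
        ⊆ {q : WeakDual ℝ Y | (∀ y ∈ F, 0 ≤ q y) ∧ q xh = 0})) :=
  multSet_closed_convex_subset_general F hne hcl hconv xh hx
end
end
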